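/- Let L be a positive definite even lattice and λ ∈ L° with minimal length in L + λ. Then for each α ∈ L, (λ, α)² ≤ |α|⁴/4, with equality if and only if α ∈ Δ(λ) ∪ Δ(-λ), where Δ(μ) = {β ∈ L : |μ + β|² = |μ|²}. -/
import Mathlib


open scoped InnerProductSpace

/-- For `λ ∈ L°` of minimal length in `L + λ` and `α ∈ L`, `(λ,α)² ≤ |α|⁴/4`, with
equality iff `α ∈ Δ(λ) ∪ Δ(-λ)`. -/
theorem stmt_5 {H : Type*} [NormedAddCommGroup H] [InnerProductSpace ℝ H]
    (L : AddSubgroup H)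
    (heven : ∀ α ∈ L, ∃ n : ℤ, ⟪α, α⟫_ℝ = 2 * n)
    (lam : H)
    (hdual : ∀ α ∈ L, ∃ n : ℤ, ⟪lam, α⟫_ℝ = n)
    (hmin : ∀ β ∈ L, ⟪lam + β, lam + β⟫_ℝ ≥ ⟪lam, lam⟫_ℝ) :
    ∀ α ∈ L, ⟪lam, α⟫_ℝ ^ 2 ≤ ⟪α, α⟫_ℝ ^ 2 / 4 ∧
      (⟪lam, α⟫_ℝ ^ 2 = ⟪α, α⟫_ℝ ^ 2 / 4 ↔
        (⟪lam + α, lam + α⟫_ℝ = ⟪lam, lam⟫_ℝ ∨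
          ⟪-lam + α, -lam + α⟫_ℝ = ⟪-lam, -lam⟫_ℝ)) := by
  intro α hα
  have h1 := hmin α hα
  have h2 := hmin (-α) (neg_mem hα)
  have e1 : ⟪lam + α, lam + α⟫_ℝ = ⟪lam, lam⟫_ℝ + 2 * ⟪lam, α⟫_ℝ + ⟪α, α⟫_ℝ :=
    real_inner_add_add_self lam α
  have e2 : ⟪lam + -α, lam + -α⟫_ℝ = ⟪lam, lam⟫_ℝ - 2 * ⟪lam, α⟫_ℝ + ⟪α, α⟫_ℝ := by
    rw [real_inner_add_add_self, inner_neg_neg, inner_neg_right]; ring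
  have e3 : ⟪-lam + α, -lam + α⟫_ℝ = ⟪lam, lam⟫_ℝ - 2 * ⟪lam, α⟫_ℝ + ⟪α, α⟫_ℝ := by
    rw [real_inner_add_add_self, inner_neg_neg, inner_neg_left]; ring
  have e4 : ⟪-lam, -lam⟫_ℝ = ⟪lam, lam⟫_ℝ := by rw [inner_neg_neg]
  rw [e1] at h1
  rw [e2] at h2
  constructor
  · nlinarith
  · rw [e1, e3, e4]
    constructor
    · intro h
      have : (2 * ⟪lam, α⟫_ℝ - ⟪α, α⟫_ℝ) * (2 * ⟪lam, α⟫_ℝ + ⟪α, α⟫_ℝ) = 0 := by nlinarith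
      rcases mul_eq_zero.1 this with h' | h'
      · right; linarith
      · left; linarith
    · rintro (h | h) <;> nlinarith
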